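/- Let q > 1 be a real number, let α₁, α₂ ∈ ℂ satisfy |α₁ α₂| = 1 and |α₁| < q^{1/2}, |α₂| < q^{1/2}, and let s ∈ ℂ with Re(s) ≥ 0. For m ≥ 0 set A_m = ∑_{j=0}^{m} α₁^{j} α₂^{m−j}. Then the series ∑_{m=0}^{∞} A_{m+2} · conj(A_m) · q^{−m(s+1)} converges absolutely and ( ∏_{i ∈ {1,2}} ∏_{j ∈ {1,2}} (1 − α_i · conj(α_j) · q^{−(s+1)}) ) · ∑_{m=0}^{∞} A_{m+2} · conj(A_m) · q^{−m(s+1)} = (α₁ + α₂)² − α₁α₂ − α₁α₂ · |α₁ + α₂|² · q^{−(s+1)} + α₁α₂ · q^{−2(s+1)}. -/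

import Mathlib

/-!
`A_m` satisfies `A_{m+2} = (α₁ + α₂) A_{m+1} - α₁α₂ A_m`, so the products `A_{m+2} · conj A_m`
satisfy the order-four linear recurrence whose characteristic roots are the `αᵢ · conj αⱼ`.
Multiplying the generating series of such a sequence by the reversed characteristic polynomial
`∏ (1 - αᵢ · conj αⱼ · t)` leaves a cubic polynomial in `t` determined by the first four terms;
here its cubic coefficient vanishes identically and `|α₁α₂| = 1` simplifies the quadratic one.
Absolute convergence follows from `|A_m| ≤ (m + 1) max |αᵢ| ^ m` and `|q^{-(s+1)}| ≤ q⁻¹`.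
-/

open Complex

/-- The normalized spherical Whittaker value `A_m = ∑_{j=0}^{m} α₁^j α₂^{m-j}`. -/
noncomputable def Asph (α₁ α₂ : ℂ) (m : ℕ) : ℂ :=
  ∑ j ∈ Finset.range (m + 1), α₁ ^ j * α₂ ^ (m - j)

open ComplexConjugate Finset

namespace LinearRecurrence

variable {R : Type*} [CommRing R]

/-- The recurrence `u (n + 2) = a * u (n + 1) - b * u n`. -/
def secondOrder (a b : R) : LinearRecurrence R := ⟨2, ![-b, a]⟩

/-- If `X ^ 2 - a * X + b` has roots `α₁, α₂` and `X ^ 2 - c * X + d` has roots `β₁, β₂`, the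
characteristic polynomial of this recurrence is `∏ i j, (X - αᵢ βⱼ)`. -/
def tensorSecondOrder (a b c d : R) : LinearRecurrence R :=
  ⟨4, ![-(b ^ 2 * d ^ 2), a * b * c * d, -(a ^ 2 * d + b * c ^ 2 - 2 * b * d), a * c]⟩

theorem isSolution_secondOrder_iff {a b : R} {u : ℕ → R} :
    (secondOrder a b).IsSolution u ↔ ∀ n, u (n + 2) = a * u (n + 1) - b * u n := by
  change (∀ n, u (n + 2) = ∑ i : Fin 2, ![-b, a] i * u (n + i)) ↔ _
  simp only [Fin.sum_univ_two, Matrix.cons_val_zero, Matrix.cons_val_one, Fin.val_zero,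
    Fin.val_one, add_zero]
  exact forall_congr' fun n ↦ by rw [neg_mul, neg_add_eq_sub]

theorem IsSolution.add_right {E : LinearRecurrence R} {u : ℕ → R} (hu : E.IsSolution u) (k : ℕ) :
    E.IsSolution fun n ↦ u (n + k) := fun n ↦ by
  simpa only [add_right_comm] using hu (n + k)

theorem IsSolution.map_secondOrder {S : Type*} [CommRing S] (f : R →+* S) {a b : R} {u : ℕ → R}
    (hu : (secondOrder a b).IsSolution u) : (secondOrder (f a) (f b)).IsSolution (f ∘ u) := by
  rw [isSolution_secondOrder_iff] at hu ⊢
  intro n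
  simp only [Function.comp_apply, hu n, map_sub, map_mul]

theorem IsSolution.mul_of_secondOrder {a b c d : R} {u v : ℕ → R}
    (hu : (secondOrder a b).IsSolution u) (hv : (secondOrder c d).IsSolution v) :
    (tensorSecondOrder a b c d).IsSolution (u * v) := by
  rw [isSolution_secondOrder_iff] at hu hv
  intro n
  change (u * v) (n + 4) = ∑ i : Fin 4, _ * (u * v) (n + i)
  simp only [Fin.sum_univ_four, Pi.mul_apply]
  change u (n + 4) * v (n + 4) = -(b ^ 2 * d ^ 2) * (u n * v n) +
    a * b * c * d * (u (n + 1) * v (n + 1)) +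
    -(a ^ 2 * d + b * c ^ 2 - 2 * b * d) * (u (n + 2) * v (n + 2)) + a * c * (u (n + 3) * v (n + 3))
  have hu3 : u (n + 3) = a * u (n + 2) - b * u (n + 1) := hu (n + 1)
  have hu4 : u (n + 4) = a * u (n + 3) - b * u (n + 2) := hu (n + 2)
  have hv3 : v (n + 3) = c * v (n + 2) - d * v (n + 1) := hv (n + 1)
  have hv4 : v (n + 4) = c * v (n + 3) - d * v (n + 2) := hv (n + 2)
  rw [hu4, hv4, hu3, hv3, hu n, hv n]
  ring

theorem IsSolution.tsum_mul_pow [TopologicalSpace R] [IsTopologicalRing R] [T2Space R]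
    {E : LinearRecurrence R} {u : ℕ → R} (hu : E.IsSolution u) {t : R}
    (hsum : Summable fun n ↦ u n * t ^ n) :
    ∑' n, u n * t ^ n - ∑ n ∈ range E.order, u n * t ^ n =
      ∑ i, E.coeffs i * t ^ (E.order - i) * (∑' n, u n * t ^ n - ∑ n ∈ range i, u n * t ^ n) := by
  have tail (k : ℕ) :
      ∑' n, u (n + k) * t ^ (n + k) = ∑' n, u n * t ^ n - ∑ n ∈ range k, u n * t ^ n :=
    eq_sub_of_add_eq' (hsum.sum_add_tsum_nat_add k)
  have shift (n : ℕ) : u (n + E.order) * t ^ (n + E.order) =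
      ∑ i, E.coeffs i * t ^ (E.order - i) * (u (n + i) * t ^ (n + i)) := by
    rw [hu n, Finset.sum_mul]
    refine Finset.sum_congr rfl fun i _ ↦ ?_
    rw [show n + E.order = (E.order - i) + (n + i) by omega, pow_add]
    ring
  have hsum_shift (i : Fin E.order) : Summable fun n ↦ u (n + i) * t ^ (n + i) :=
    (summable_nat_add_iff (i : ℕ)).2 hsum
  rw [← tail, tsum_congr shift,
    Summable.tsum_finsetSum fun i _ ↦ (hsum_shift i).mul_left (E.coeffs i * t ^ (E.order - i))]
  refine Finset.sum_congr rfl fun i _ ↦ ?_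
  rw [(hsum_shift i).tsum_mul_left, tail]

theorem IsSolution.tsum_mul_pow_of_tensorSecondOrder [TopologicalSpace R] [IsTopologicalRing R]
    [T2Space R] {a b c d : R} {u : ℕ → R} (hu : (tensorSecondOrder a b c d).IsSolution u) {t : R}
    (hsum : Summable fun n ↦ u n * t ^ n) :
    (1 - a * c * t + (a ^ 2 * d + b * c ^ 2 - 2 * b * d) * t ^ 2 - a * b * c * d * t ^ 3 +
        b ^ 2 * d ^ 2 * t ^ 4) * ∑' n, u n * t ^ n =
      u 0 + (u 1 - a * c * u 0) * t +
        (u 2 - a * c * u 1 + (a ^ 2 * d + b * c ^ 2 - 2 * b * d) * u 0) * t ^ 2 +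
        (u 3 - a * c * u 2 + (a ^ 2 * d + b * c ^ 2 - 2 * b * d) * u 1 - a * b * c * d * u 0) *
          t ^ 3 := by
  have key := hu.tsum_mul_pow hsum
  change _ - ∑ n ∈ range 4, _ = ∑ i : Fin 4, _ at key
  have h3 : ((3 : Fin 4) : ℕ) = 3 := rfl
  simp only [Fin.sum_univ_four, tensorSecondOrder, Matrix.cons_val, Fin.val_zero, Fin.val_one,
    Fin.val_two, h3, Finset.sum_range_succ, Finset.sum_range_zero] at key
  linear_combination key

end LinearRecurrence

open LinearRecurrence

section Asph

variable (α₁ α₂ : ℂ)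

theorem Asph_succ (m : ℕ) : Asph α₁ α₂ (m + 1) = α₁ * Asph α₁ α₂ m + α₂ ^ (m + 1) := by
  unfold Asph
  rw [Finset.sum_range_succ', Finset.mul_sum]
  simp only [pow_zero, one_mul, Nat.sub_zero]
  congr 1
  refine Finset.sum_congr rfl fun j hj ↦ ?_
  rw [show m + 1 - (j + 1) = m - j by omega, pow_succ]
  ring

theorem isSolution_secondOrder_Asph :
    (secondOrder (α₁ + α₂) (α₁ * α₂)).IsSolution (Asph α₁ α₂) := by
  rw [isSolution_secondOrder_iff]
  intro m
  linear_combination Asph_succ α₁ α₂ (m + 1) - α₂ * Asph_succ α₁ α₂ m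

theorem norm_Asph_le {M : ℝ} (h₁ : ‖α₁‖ ≤ M) (h₂ : ‖α₂‖ ≤ M) (m : ℕ) :
    ‖Asph α₁ α₂ m‖ ≤ (m + 1) * M ^ m := by
  calc ‖Asph α₁ α₂ m‖ ≤ ∑ j ∈ range (m + 1), ‖α₁ ^ j * α₂ ^ (m - j)‖ := norm_sum_le _ _
    _ ≤ ∑ j ∈ range (m + 1), M ^ m := by
        refine Finset.sum_le_sum fun j hj ↦ ?_
        have hjm : j ≤ m := Nat.lt_succ_iff.mp (Finset.mem_range.mp hj)
        have hM : 0 ≤ M := (norm_nonneg _).trans h₁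
        rw [norm_mul, norm_pow, norm_pow, ← pow_mul_pow_sub M hjm]
        gcongr
    _ = (m + 1) * M ^ m := by
        rw [Finset.sum_const, Finset.card_range, nsmul_eq_mul]
        push_cast
        ring

theorem summable_norm_Asph_add_two_mul_conj {t : ℂ} {M : ℝ} (h₁ : ‖α₁‖ ≤ M) (h₂ : ‖α₂‖ ≤ M)
    (ht : M ^ 2 * ‖t‖ < 1) :
    Summable fun m : ℕ ↦ ‖Asph α₁ α₂ (m + 2) * conj (Asph α₁ α₂ m) * t ^ m‖ := by
  set r := M ^ 2 * ‖t‖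
  have hr : ‖r‖ < 1 := by rwa [Real.norm_of_nonneg (by positivity)]
  have hmajorant : Summable fun m : ℕ ↦ M ^ 2 * (((m : ℝ) + 3) * (m + 1) * r ^ m) := by
    have h := (summable_pow_mul_geometric_of_norm_lt_one 2 hr).add
      (((summable_pow_mul_geometric_of_norm_lt_one 1 hr).mul_left 4).add
        ((summable_geometric_of_norm_lt_one hr).mul_left 3))
    exact (h.mul_left (M ^ 2)).congr fun m ↦ by ring
  have hM : 0 ≤ M := (norm_nonneg _).trans h₁
  refine hmajorant.of_nonneg_of_le (fun _ ↦ norm_nonneg _) fun m ↦ ?_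
  have hA₂ := norm_Asph_le α₁ α₂ h₁ h₂ (m + 2)
  push_cast at hA₂
  calc ‖Asph α₁ α₂ (m + 2) * conj (Asph α₁ α₂ m) * t ^ m‖
      = ‖Asph α₁ α₂ (m + 2)‖ * ‖Asph α₁ α₂ m‖ * ‖t‖ ^ m := by
        rw [norm_mul, norm_mul, norm_pow, RCLike.norm_conj]
    _ ≤ ((m + 2 + 1) * M ^ (m + 2)) * ((m + 1) * M ^ m) * ‖t‖ ^ m := by
        gcongr
        exact norm_Asph_le α₁ α₂ h₁ h₂ m
    _ = M ^ 2 * (((m : ℝ) + 3) * (m + 1) * r ^ m) := by ring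

theorem mul_tsum_Asph_add_two_mul_conj {t : ℂ} (hunit : α₁ * α₂ * conj (α₁ * α₂) = 1)
    (hsum : Summable fun m : ℕ ↦ Asph α₁ α₂ (m + 2) * conj (Asph α₁ α₂ m) * t ^ m) :
    (1 - α₁ * conj α₁ * t) * (1 - α₁ * conj α₂ * t) * (1 - α₂ * conj α₁ * t) *
        (1 - α₂ * conj α₂ * t) * ∑' m : ℕ, Asph α₁ α₂ (m + 2) * conj (Asph α₁ α₂ m) * t ^ m =
      (α₁ + α₂) ^ 2 - α₁ * α₂ - α₁ * α₂ * ((α₁ + α₂) * conj (α₁ + α₂)) * t +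
        α₁ * α₂ * t ^ 2 := by
  have hrec := ((isSolution_secondOrder_Asph α₁ α₂).add_right 2).mul_of_secondOrder
    ((isSolution_secondOrder_Asph α₁ α₂).map_secondOrder (starRingEnd ℂ))
  have key := hrec.tsum_mul_pow_of_tensorSecondOrder hsum
  simp only [Pi.mul_apply, Function.comp_apply] at key
  calc _ = _ * ∑' m : ℕ, Asph α₁ α₂ (m + 2) * conj (Asph α₁ α₂ m) * t ^ m := by
        simp only [map_add, map_mul]
        ring
    _ = _ := key
    _ = _ := by
        rw [map_mul] at hunit
        norm_num [Asph, Finset.sum_range_succ]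
        linear_combination α₁ * α₂ * t ^ 2 * hunit

end Asph

theorem norm_ofReal_cpow_neg_add_one_le {q : ℝ} (hq : 1 ≤ q) {s : ℂ} (hs : 0 ≤ s.re) :
    ‖(q : ℂ) ^ (-(s + 1))‖ ≤ q⁻¹ := by
  rw [norm_cpow_eq_rpow_re_of_pos (zero_lt_one.trans_le hq), ← Real.rpow_neg_one]
  refine Real.rpow_le_rpow_of_exponent_le hq ?_
  simp only [neg_re, add_re, one_re]
  linarith

theorem stmt18 (q : ℝ) (hq : 1 < q) (α₁ α₂ : ℂ)
    (hmul : ‖α₁ * α₂‖ = 1)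
    (h1 : ‖α₁‖ < Real.sqrt q) (h2 : ‖α₂‖ < Real.sqrt q)
    (s : ℂ) (hs : 0 ≤ s.re) :
    Summable (fun m : ℕ =>
      ‖Asph α₁ α₂ (m + 2) * (starRingEnd ℂ) (Asph α₁ α₂ m) *
        (q : ℂ) ^ (-(m : ℂ) * (s + 1))‖) ∧
    ((1 - α₁ * (starRingEnd ℂ) α₁ * (q : ℂ) ^ (-(s + 1))) *
          (1 - α₁ * (starRingEnd ℂ) α₂ * (q : ℂ) ^ (-(s + 1))) *
          (1 - α₂ * (starRingEnd ℂ) α₁ * (q : ℂ) ^ (-(s + 1))) *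
          (1 - α₂ * (starRingEnd ℂ) α₂ * (q : ℂ) ^ (-(s + 1)))) *
        (∑' m : ℕ, Asph α₁ α₂ (m + 2) * (starRingEnd ℂ) (Asph α₁ α₂ m) *
          (q : ℂ) ^ (-(m : ℂ) * (s + 1)))
      = (α₁ + α₂) ^ 2 - α₁ * α₂ -
          α₁ * α₂ * ((α₁ + α₂) * (starRingEnd ℂ) (α₁ + α₂)) * (q : ℂ) ^ (-(s + 1)) +
          α₁ * α₂ * (q : ℂ) ^ (-2 * (s + 1)) := by
  set t : ℂ := (q : ℂ) ^ (-(s + 1))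
  have hpow (m : ℕ) : (q : ℂ) ^ (-(m : ℂ) * (s + 1)) = t ^ m := by
    rw [show -(m : ℂ) * (s + 1) = m * (-(s + 1)) by ring, cpow_nat_mul]
  have hpow_two : (q : ℂ) ^ (-2 * (s + 1)) = t ^ 2 := by
    rw [← hpow 2]
    norm_num
  set M := max ‖α₁‖ ‖α₂‖
  have hMq : M ^ 2 < q := (Real.lt_sqrt (by positivity)).1 (max_lt h1 h2)
  have hq0 : 0 < q := zero_lt_one.trans hq
  have hMt : M ^ 2 * ‖t‖ < 1 :=
    calc M ^ 2 * ‖t‖ ≤ M ^ 2 * q⁻¹ := by gcongr; exact norm_ofReal_cpow_neg_add_one_le hq.le hs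
      _ < q * q⁻¹ := by gcongr
      _ = 1 := mul_inv_cancel₀ hq0.ne'
  have hsum := summable_norm_Asph_add_two_mul_conj α₁ α₂ (le_max_left _ _) (le_max_right _ _) hMt
  have hunit : α₁ * α₂ * conj (α₁ * α₂) = 1 := by
    rw [mul_conj, normSq_eq_norm_sq, hmul]
    norm_num
  simp only [hpow, hpow_two]
  exact ⟨hsum, mul_tsum_Asph_add_two_mul_conj α₁ α₂ hunit hsum.of_norm⟩
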